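/- Let m ≥ 1 and 0 ≤ k ≤ m/2, and set λ = (3m-2k, m+2k). Then Σ_{α,β ⊢ m} c^λ_{2α,2β} − Σ_{γ ⊢ m+1, δ ⊢ m-1} c^λ_{2γ,2δ} = 1, where all partitions α, β, γ, δ have at most two parts and c denotes the Littlewood–Richardson coefficient. -/

import Mathlib

open MvPolynomial

noncomputable section SchurFramework

/-- `hPolyZ ι d` : the complete homogeneous symmetric polynomial of degree `d`
(zero for negative `d`). -/
def hPolyZ (ι : Type) [Fintype ι] [DecidableEq ι] (d : ℤ) : MvPolynomial ι ℤ :=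
  if 0 ≤ d then MvPolynomial.hsymm ι ℤ d.toNat else 0

/-- The Schur polynomial associated to the partition `l` (a weakly decreasing list),
defined by the Jacobi–Trudi formula `s_l = det (h_{l_i - i + j})`. -/
def schurPoly (ι : Type) [Fintype ι] [DecidableEq ι] (l : List ℕ) : MvPolynomial ι ℤ :=
  Matrix.det (Matrix.of fun i j : Fin l.length =>
    hPolyZ ι ((l.get i : ℤ) - (i : ℕ) + (j : ℕ)))

/-- The Vandermonde determinant `∏_{i<j} (x_i - x_j) = a_δ`. -/
def vanderPoly (N : ℕ) : MvPolynomial (Fin N) ℤ :=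
  ∏ i : Fin N, ∏ j ∈ Finset.Ioi i, (X i - X j)

/-- The exponent vector `l + δ` where `δ = (N-1, N-2, …, 0)`. -/
def expVec (N : ℕ) (l : List ℕ) : Fin N →₀ ℕ :=
  Finsupp.equivFunOnFinite.symm (fun i => l.getD (i : ℕ) 0 + (N - 1 - (i : ℕ)))

/-- The multiplicity of the Schur polynomial `s_l` in a symmetric polynomial `f`
in `N ≥ length l` variables: since `f·a_δ = Σ_κ mult_κ · a_{κ+δ}`, this multiplicity
is the coefficient of the monomial `x^{l+δ}` in `f · a_δ`. -/
def schurMult (N : ℕ) (f : MvPolynomial (Fin N) ℤ) (l : List ℕ) : ℤ :=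
  MvPolynomial.coeff (expVec N l) (f * vanderPoly N)

/-- The Littlewood–Richardson coefficient `c^lam_{mu, nu}`, defined as the multiplicity
of `s_lam` in `s_mu · s_nu` (computed in sufficiently many variables). -/
def lrCoeff (lam mu nu : List ℕ) : ℤ :=
  schurMult (lam.length + mu.length + nu.length)
    (schurPoly (Fin (lam.length + mu.length + nu.length)) mu *
      schurPoly (Fin (lam.length + mu.length + nu.length)) nu) lam

/-- `l` is a partition: a weakly decreasing list of positive integers. -/
def IsPartitionList (l : List ℕ) : Prop := l.Pairwise (· ≥ ·) ∧ ∀ x ∈ l, 0 < x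

/-- The Kronecker coefficient `g_{mu, nu, lam}`, defined via
`s_lam(x·y) = Σ g_{mu,nu,lam} s_mu(x) s_nu(y)`: it is the coefficient of
`x^{mu+δ} y^{nu+δ}` in `s_lam(x·y) · a_δ(x) · a_δ(y)`. -/
def kron (mu nu lam : List ℕ) : ℤ :=
  MvPolynomial.coeff
    (Finsupp.equivFunOnFinite.symm (Sum.elim
      (fun i : Fin mu.length => mu.getD (i : ℕ) 0 + (mu.length - 1 - (i : ℕ)))
      (fun j : Fin nu.length => nu.getD (j : ℕ) 0 + (nu.length - 1 - (j : ℕ)))))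
    ((MvPolynomial.aeval
        (fun p : Fin mu.length × Fin nu.length =>
          (X (Sum.inl p.1) * X (Sum.inr p.2) :
            MvPolynomial (Fin mu.length ⊕ Fin nu.length) ℤ))
        (schurPoly (Fin mu.length × Fin nu.length) lam))
      * (∏ i : Fin mu.length, ∏ j ∈ Finset.Ioi i, (X (Sum.inl i) - X (Sum.inl j)))
      * (∏ i : Fin nu.length, ∏ j ∈ Finset.Ioi i, (X (Sum.inr i) - X (Sum.inr j))))

/-- The character of the plethysm `S^lam(Sym² V)` for `dim V = N`: the Schur polynomial
`s_lam` evaluated at the products `x_i x_j`, `i ≤ j` (the monomials of `Sym²`). -/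
def plethSym2 (N : ℕ) (lam : List ℕ) : MvPolynomial (Fin N) ℤ :=
  MvPolynomial.aeval
    (fun p : {q : Fin N × Fin N // q.1 ≤ q.2} =>
      (X p.1.1 * X p.1.2 : MvPolynomial (Fin N) ℤ))
    (schurPoly {q : Fin N × Fin N // q.1 ≤ q.2} lam)

/-- The conjugate (transpose) partition. -/
def conjList (l : List ℕ) : List ℕ :=
  (List.range (l.headD 0)).map (fun i => (l.filter (fun a => decide (i < a))).length)

end SchurFramework

/-!
For two-row partitions everything can be computed in two variables. In the Vandermonde
expansion of `schurMult`, only the identity and the transposition `(0 1)` contribute to the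
coefficient of `x^(λ+δ)` when `λ = (l₁, l₂)`, so that coefficient only involves monomials in
`x₀, x₁`; setting the other variables to zero turns `s_μ` into
`s_μ(x₀, x₁) = ∑_{μ₂ ≤ j ≤ μ₁} x₀^j x₁^(|μ|-j)`. Hence `c^λ_{μν}` is the coefficient of
`x₀^(l₁+1) x₁^l₂` in `(x₀^(μ₁+1) x₁^μ₂ - x₀^μ₂ x₁^(μ₁+1)) · s_ν(x₀, x₁)`, a difference of two
indicators. For `λ = (3m-2k, m+2k)` the two double sums of these indicators then cancel row by
row after the shift `t ↦ t + 1`, up to one term per row, and the leftover single sums add up to `1`.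
-/

theorem Multiset.degree_toFinsupp {σ : Type*} [DecidableEq σ] (s : Multiset σ) :
    (Multiset.toFinsupp s).degree = Multiset.card s :=
  Multiset.toFinsupp_sum_eq s

namespace MvPolynomial

variable {σ τ R : Type*} [CommSemiring R]

theorem prod_map_X_eq_monomial [DecidableEq σ] (s : Multiset σ) :
    (s.map X).prod = (monomial (Multiset.toFinsupp s) 1 : MvPolynomial σ R) := by
  conv_lhs => rw [← Multiset.toFinsupp_toMultiset s]
  rw [Finsupp.toMultiset_map, Finsupp.prod_toMultiset, Finsupp.prod_mapDomain_index (by simp)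
    (by simp [pow_add]), monomial_eq, C_1, one_mul]

theorem coeff_hsymm [Fintype σ] [DecidableEq σ] (n : ℕ) (d : σ →₀ ℕ) :
    coeff d (hsymm σ R n) = if d.degree = n then 1 else 0 := by
  simp only [hsymm, prod_map_X_eq_monomial, coeff_sum, coeff_monomial]
  split_ifs with hd
  · have hcard : Multiset.card (Finsupp.toMultiset d) = n := by
      rw [← hd, ← Multiset.degree_toFinsupp, Finsupp.toMultiset_toFinsupp]
    rw [Fintype.sum_eq_single ⟨Finsupp.toMultiset d, hcard⟩ fun s hs => if_neg fun h => hs ?_]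
    · simp
    · exact Subtype.ext (by simp [← h])
  · refine Finset.sum_eq_zero fun s _ => if_neg ?_
    rintro rfl
    exact hd (by simp [Multiset.degree_toFinsupp])

theorem killCompl_hsymm [Fintype σ] [DecidableEq σ] [Fintype τ] [DecidableEq τ] {f : τ → σ}
    (hf : Function.Injective f) (n : ℕ) :
    killCompl hf (hsymm σ R n) = hsymm τ R n := by
  ext d
  rw [coeff_killCompl, coeff_hsymm, coeff_hsymm, Finsupp.degree_mapDomain]

end MvPolynomial

section JacobiTrudi

variable {σ τ : Type} [Fintype σ] [DecidableEq σ] [Fintype τ] [DecidableEq τ]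

theorem hPolyZ_natCast (n : ℕ) : hPolyZ σ n = hsymm σ ℤ n := by
  rw [hPolyZ, if_pos (Int.natCast_nonneg n), Int.toNat_natCast]

theorem schurPoly_pair (p q : ℕ) :
    schurPoly σ [p, q] = hPolyZ σ p * hPolyZ σ q - hPolyZ σ (p + 1) * hPolyZ σ (q - 1) := by
  simp [schurPoly, Matrix.det_fin_two]

theorem killCompl_hPolyZ {f : τ → σ} (hf : Function.Injective f) (d : ℤ) :
    killCompl hf (hPolyZ σ d) = hPolyZ τ d := by
  unfold hPolyZ
  split_ifs
  · exact killCompl_hsymm hf _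
  · exact map_zero _

theorem killCompl_schurPoly {f : τ → σ} (hf : Function.Injective f) (l : List ℕ) :
    killCompl hf (schurPoly σ l) = schurPoly τ l := by
  rw [schurPoly, AlgHom.map_det]
  congr 1
  ext i j : 1
  exact killCompl_hPolyZ hf _

end JacobiTrudi

section PairExp

noncomputable def pairExp {n : ℕ} (a b : ℕ) : Fin (n + 2) →₀ ℕ :=
  Finsupp.single 0 a + Finsupp.single 1 b

variable {n : ℕ}

theorem pairExp_apply (a b : ℕ) (j : Fin (n + 2)) :
    pairExp a b j = if (j : ℕ) = 0 then a else if (j : ℕ) = 1 then b else 0 := by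
  rcases j with ⟨_ | _ | j, hj⟩ <;> simp [pairExp, Fin.ext_iff]

theorem pairExp_le_pairExp_iff {a b c d : ℕ} :
    (pairExp a b : Fin (n + 2) →₀ ℕ) ≤ pairExp c d ↔ a ≤ c ∧ b ≤ d := by
  refine ⟨fun h => ⟨by simpa [pairExp_apply] using h 0, by simpa [pairExp_apply] using h 1⟩,
    fun h j => ?_⟩
  simp only [pairExp_apply]
  split_ifs <;> omega

theorem pairExp_inj {a b c d : ℕ} :
    (pairExp a b : Fin (n + 2) →₀ ℕ) = pairExp c d ↔ a = c ∧ b = d := by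
  rw [le_antisymm_iff, pairExp_le_pairExp_iff, pairExp_le_pairExp_iff]
  omega

theorem pairExp_sub_pairExp (a b c d : ℕ) :
    (pairExp c d : Fin (n + 2) →₀ ℕ) - pairExp a b = pairExp (c - a) (d - b) := by
  ext j
  simp only [Finsupp.tsub_apply, pairExp_apply]
  split_ifs <;> rfl

theorem degree_pairExp (a b : ℕ) : (pairExp a b : Fin (n + 2) →₀ ℕ).degree = a + b := by
  simp [pairExp]

theorem eq_pairExp (d : Fin 2 →₀ ℕ) : d = pairExp (d 0) (d 1) := by
  ext j
  fin_cases j <;> simp [pairExp_apply]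

theorem mapDomain_castLE_pairExp (a b : ℕ) :
    (pairExp a b : Fin 2 →₀ ℕ).mapDomain (Fin.castLE (Nat.le_add_left 2 n)) = pairExp a b := by
  simp only [pairExp, Finsupp.mapDomain_add, Finsupp.mapDomain_single]
  rfl

theorem X_zero_pow_mul_X_one_pow (a b : ℕ) :
    (X 0 ^ a * X 1 ^ b : MvPolynomial (Fin (n + 2)) ℤ) = monomial (pairExp a b) 1 := by
  rw [X_pow_eq_monomial, X_pow_eq_monomial, monomial_mul, one_mul, pairExp]

theorem coeff_X_zero_sub_X_one_mul (g : MvPolynomial (Fin (n + 2)) ℤ) (a b : ℕ) :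
    coeff (pairExp (a + 1) (b + 1)) ((X 0 - X 1) * g) =
      coeff (pairExp a (b + 1)) g - coeff (pairExp (a + 1) b) g := by
  have h0 : (pairExp (a + 1) (b + 1) : Fin (n + 2) →₀ ℕ) =
      Finsupp.single 0 1 + pairExp a (b + 1) := by
    simp only [pairExp, Finsupp.single_add]
    abel
  have h1 : (pairExp (a + 1) (b + 1) : Fin (n + 2) →₀ ℕ) =
      Finsupp.single 1 1 + pairExp (a + 1) b := by
    simp only [pairExp, Finsupp.single_add]
    abel
  rw [sub_mul, coeff_sub]
  nth_rewrite 1 [h0]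
  rw [h1, coeff_X_mul, coeff_X_mul]

end PairExp

section SchurTwo

/-- The Schur polynomial `s_(p,q)(x₀, x₁)`, one monomial per semistandard tableau. -/
noncomputable def schurTwo (p q : ℕ) : MvPolynomial (Fin 2) ℤ :=
  ∑ j ∈ Finset.Icc q p, X 0 ^ j * X 1 ^ (p + q - j)

theorem coeff_schurTwo (p q c d : ℕ) :
    coeff (pairExp c d) (schurTwo p q) = if q ≤ c ∧ c ≤ p ∧ c + d = p + q then 1 else 0 := by
  simp only [schurTwo, coeff_sum, X_zero_pow_mul_X_one_pow, coeff_monomial, pairExp_inj, ite_and,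
    Finset.sum_ite_eq', Finset.mem_Icc]
  split_ifs <;> omega

theorem X_zero_sub_X_one_mul_schurTwo {p q : ℕ} (hqp : q ≤ p) :
    (X 0 - X 1) * schurTwo p q = X 0 ^ (p + 1) * X 1 ^ q - X 0 ^ q * X 1 ^ (p + 1) := by
  have hstep : ∀ j ∈ Finset.Ico q (p + 1),
      (X 0 - X 1 : MvPolynomial (Fin 2) ℤ) * (X 0 ^ j * X 1 ^ (p + q - j)) =
        X 0 ^ (j + 1) * X 1 ^ (p + q + 1 - (j + 1)) - X 0 ^ j * X 1 ^ (p + q + 1 - j) := by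
    intro j hj
    rw [Finset.mem_Ico] at hj
    rw [show p + q + 1 - (j + 1) = p + q - j by omega, show p + q + 1 - j = p + q - j + 1 by omega]
    ring
  rw [schurTwo, Finset.mul_sum, ← Finset.Ico_add_one_right_eq_Icc, Finset.sum_congr rfl hstep,
    Finset.sum_Ico_sub (fun j => (X 0 : MvPolynomial (Fin 2) ℤ) ^ j * X 1 ^ (p + q + 1 - j))
      (by omega),
    show p + q + 1 - (p + 1) = q by omega, show p + q + 1 - q = p + 1 by omega]

theorem hsymm_fin_two (n : ℕ) : hsymm (Fin 2) ℤ n = schurTwo n 0 := by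
  ext d
  rw [eq_pairExp d, coeff_hsymm, coeff_schurTwo, degree_pairExp]
  split_ifs <;> omega

theorem X_zero_sub_X_one_mul_hsymm (n : ℕ) :
    (X 0 - X 1) * hsymm (Fin 2) ℤ n = X 0 ^ (n + 1) - X 1 ^ (n + 1) := by
  rw [hsymm_fin_two, X_zero_sub_X_one_mul_schurTwo (Nat.zero_le n)]
  ring

theorem schurPoly_fin_two {p q : ℕ} (hqp : q ≤ p) : schurPoly (Fin 2) [p, q] = schurTwo p q := by
  rw [schurPoly_pair]
  obtain rfl | ⟨c, rfl⟩ : q = 0 ∨ ∃ c, q = c + 1 := by cases q <;> simp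
  · have hneg : hPolyZ (Fin 2) (-1) = 0 := if_neg (by norm_num)
    rw [hPolyZ_natCast, hPolyZ_natCast, hsymm_fin_two, Nat.cast_zero, zero_sub, hneg, mul_zero,
      sub_zero, hsymm_zero, mul_one]
  · have hne : (X 0 - X 1 : MvPolynomial (Fin 2) ℤ) ≠ 0 :=
      sub_ne_zero.mpr ((X_injective (σ := Fin 2) (R := ℤ)).ne (by decide))
    refine mul_left_cancel₀ hne (mul_left_cancel₀ hne ?_)
    rw [X_zero_sub_X_one_mul_schurTwo hqp, show ((c + 1 : ℕ) : ℤ) - 1 = c by push_cast; ring,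
      show (p : ℤ) + 1 = (p + 1 : ℕ) by push_cast; ring]
    simp only [hPolyZ_natCast]
    linear_combination
      (X 0 - X 1) * hsymm (Fin 2) ℤ (c + 1) * X_zero_sub_X_one_mul_hsymm p
      + (X 0 ^ (p + 1) - X 1 ^ (p + 1)) * X_zero_sub_X_one_mul_hsymm (c + 1)
      - (X 0 - X 1) * hsymm (Fin 2) ℤ c * X_zero_sub_X_one_mul_hsymm (p + 1)
      - (X 0 ^ (p + 1 + 1) - X 1 ^ (p + 1 + 1)) * X_zero_sub_X_one_mul_hsymm c

end SchurTwo

section Vandermonde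

theorem Equiv.Perm.apply_eq_self_of_le_apply {N c : ℕ} (σ : Equiv.Perm (Fin N))
    (h : ∀ j : Fin N, c ≤ (j : ℕ) → (j : ℕ) ≤ σ j) (j : Fin N) (hj : c ≤ (j : ℕ)) : σ j = j := by
  set S := Finset.univ.filter fun j : Fin N => c ≤ (j : ℕ)
  have hmaps : S.map σ.toEmbedding ⊆ S := by
    intro i hi
    obtain ⟨j, hj, rfl⟩ := Finset.mem_map.mp hi
    simp only [S, Finset.mem_filter, Finset.mem_univ, true_and] at hj ⊢
    exact hj.trans (h j hj)
  -- `σ` permutes `S` without decreasing any element, so it cannot increase one either.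
  have hsum : ∑ j ∈ S, (j : ℕ) = ∑ j ∈ S, (σ j : ℕ) := by
    conv_lhs => rw [← Finset.eq_of_subset_of_card_le hmaps (Finset.card_map _).ge]
    rw [Finset.sum_map]
    rfl
  exact (Fin.ext ((Finset.sum_eq_sum_iff_of_le fun i hi => h i (Finset.mem_filter.mp hi).2).mp
    hsum j (Finset.mem_filter.mpr ⟨Finset.mem_univ _, hj⟩))).symm

variable {n : ℕ}

theorem Equiv.Perm.eq_one_or_swap_of_le_apply (σ : Equiv.Perm (Fin (n + 2)))
    (h : ∀ j : Fin (n + 2), 2 ≤ (j : ℕ) → (j : ℕ) ≤ σ j) : σ = 1 ∨ σ = Equiv.swap 0 1 := by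
  have hfix := σ.apply_eq_self_of_le_apply h
  have hlow : ∀ j : Fin (n + 2), (j : ℕ) < 2 → (σ j : ℕ) < 2 := fun j hj => by
    by_contra! hσj
    have := σ.injective (hfix (σ j) hσj)
    omega
  have h0 := hlow 0 (by simp)
  have h1 := hlow 1 (by simp)
  have h01 : (σ 0 : ℕ) ≠ σ 1 := fun h => by simpa using σ.injective (Fin.ext h)
  have hcases : ∀ j : Fin (n + 2), j = 0 ∨ j = 1 ∨ 2 ≤ (j : ℕ) := fun j => by
    rcases (by omega : (j : ℕ) = 0 ∨ (j : ℕ) = 1 ∨ 2 ≤ (j : ℕ)) with hj | hj | hj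
    exacts [Or.inl (Fin.ext hj), Or.inr (Or.inl (Fin.ext (by simpa using hj))), Or.inr (Or.inr hj)]
  rcases (by omega : (σ 0 : ℕ) = 0 ∨ (σ 0 : ℕ) = 1) with h0 | h0
  · left
    ext j
    rcases hcases j with rfl | rfl | hj
    · simpa using h0
    · simp only [Equiv.Perm.coe_one, id_eq, Fin.val_one]
      omega
    · simp [hfix j hj]
  · right
    ext j
    rcases hcases j with rfl | rfl | hj
    · simpa using h0
    · simp only [Equiv.swap_apply_right, Fin.val_zero]
      omega
    · rw [hfix j hj, Equiv.swap_apply_of_ne_of_ne] <;> rintro rfl <;> simp at hj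

/-- The staircase `δ = (N-1, …, 1, 0)` permuted by `σ`: the exponent of the `σ`-term of `a_δ`. -/
noncomputable def permExp {N : ℕ} (σ : Equiv.Perm (Fin N)) : Fin N →₀ ℕ :=
  ∑ i, Finsupp.single (σ i) (i.rev : ℕ)

theorem permExp_apply {N : ℕ} (σ : Equiv.Perm (Fin N)) (j : Fin N) :
    permExp σ j = (σ.symm j).rev := by
  rw [permExp, ← Equiv.sum_comp σ.symm, Finsupp.finsetSum_apply]
  simp only [Equiv.apply_symm_apply, Finsupp.single_apply, Finset.sum_ite_eq', Finset.mem_univ,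
    if_true]

theorem permExp_one (j : Fin (n + 2)) : permExp 1 j = j.rev := by
  simp [permExp_apply, ← Equiv.Perm.inv_def]

theorem vanderPoly_eq_sum_sign (N : ℕ) :
    vanderPoly N = ∑ σ : Equiv.Perm (Fin N), σ.sign • monomial (permExp σ) (1 : ℤ) := by
  have hdet := Matrix.det_projVandermonde (fun _ => (1 : MvPolynomial (Fin N) ℤ)) X
  simp only [one_mul] at hdet
  rw [vanderPoly, ← hdet, Matrix.det_apply]
  refine Finset.sum_congr rfl fun σ _ => ?_
  rw [permExp, monomial_sum_one]
  simp [Matrix.projVandermonde_apply, X_pow_eq_monomial]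

theorem coeff_mul_vanderPoly (N : ℕ) (f : MvPolynomial (Fin N) ℤ) (e : Fin N →₀ ℕ) :
    coeff e (f * vanderPoly N) = ∑ σ : Equiv.Perm (Fin N),
      σ.sign * if permExp σ ≤ e then coeff (e - permExp σ) f else 0 := by
  simp only [vanderPoly_eq_sum_sign, Finset.mul_sum, coeff_sum]
  refine Finset.sum_congr rfl fun σ _ => ?_
  rw [Units.smul_def, mul_smul_comm, coeff_smul, coeff_mul_monomial', mul_one, zsmul_eq_mul,
    Int.cast_id]

theorem expVec_pair (l1 l2 : ℕ) : expVec (n + 2) [l1, l2] = pairExp l1 l2 + permExp 1 := by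
  ext j
  rcases j with ⟨_ | _ | j, hj⟩ <;> simp [expVec, pairExp_apply, permExp_one]

theorem permExp_swap_le_expVec_and_sub_eq {l1 l2 : ℕ} (hl2 : 1 ≤ l2) :
    permExp (Equiv.swap 0 1) ≤ expVec (n + 2) [l1, l2] ∧
      expVec (n + 2) [l1, l2] - permExp (Equiv.swap 0 1) = pairExp (l1 + 1) (l2 - 1) := by
  have hval : ∀ j : Fin (n + 2), 2 ≤ (j : ℕ) → Equiv.swap 0 1 j = j := fun j hj =>
    Equiv.swap_apply_of_ne_of_ne (by rintro rfl; simp at hj) (by rintro rfl; simp at hj)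
  refine ⟨fun j => ?_, Finsupp.ext fun j => ?_⟩ <;>
  rcases j with ⟨_ | _ | j, hj⟩ <;>
  simp [expVec, pairExp_apply, permExp_apply, hval] <;> omega

theorem schurMult_pair_eq_sub_coeff (f : MvPolynomial (Fin (n + 2)) ℤ) {l1 l2 : ℕ}
    (hl2 : 1 ≤ l2) :
    schurMult (n + 2) f [l1, l2] =
      coeff (pairExp l1 l2) f - coeff (pairExp (l1 + 1) (l2 - 1)) f := by
  have h01 : (0 : Fin (n + 2)) ≠ 1 := by simp
  have hswap := permExp_swap_le_expVec_and_sub_eq (n := n) (l1 := l1) hl2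
  rw [schurMult, coeff_mul_vanderPoly, Finset.sum_eq_add 1 (Equiv.swap 0 1)]
  · rw [expVec_pair, if_pos le_add_self, add_tsub_cancel_right, ← expVec_pair, if_pos hswap.1,
      hswap.2, Equiv.Perm.sign_one, Equiv.Perm.sign_swap h01]
    simp [sub_eq_add_neg]
  · exact fun h => by simpa using congrArg (· 0) h
  · rintro σ - ⟨h1, hswap⟩
    rw [if_neg, mul_zero]
    intro hle
    refine (Equiv.Perm.eq_one_or_swap_of_le_apply σ.symm fun j hj => ?_).elim
      (fun h => h1 (by simpa [← Equiv.Perm.inv_def] using congrArg Equiv.symm h))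
      (fun h => hswap (by simpa using congrArg Equiv.symm h))
    have := hle j
    rw [expVec_pair, Finsupp.add_apply, pairExp_apply, permExp_apply, permExp_one] at this
    simp only [Fin.val_rev] at this
    split_ifs at this <;> omega
  · simp
  · simp

end Vandermonde

section TwoRows

variable {n : ℕ}

theorem schurMult_pair_eq_coeff_killCompl (f : MvPolynomial (Fin (n + 2)) ℤ) {l1 l2 : ℕ}
    (hl2 : 1 ≤ l2) :
    schurMult (n + 2) f [l1, l2] = coeff (pairExp (l1 + 1) l2)
      ((X 0 - X 1) * killCompl (Fin.castLE_injective (Nat.le_add_left 2 n)) f) := by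
  obtain ⟨l2, rfl⟩ : ∃ b, l2 = b + 1 := ⟨l2 - 1, by omega⟩
  rw [schurMult_pair_eq_sub_coeff f hl2, Nat.add_sub_cancel, coeff_X_zero_sub_X_one_mul,
    coeff_killCompl, coeff_killCompl, mapDomain_castLE_pairExp, mapDomain_castLE_pairExp]

theorem lrCoeff_two_rows {l1 l2 p1 p2 q1 q2 : ℕ} (hp : p2 ≤ p1) (hq : q2 ≤ q1) (hl2 : 1 ≤ l2) :
    lrCoeff [l1, l2] [p1, p2] [q1, q2] =
      (if p1 + q2 ≤ l1 ∧ l1 ≤ p1 + q1 ∧ p2 ≤ l2 ∧ l1 + l2 = p1 + p2 + q1 + q2 then 1 else 0) -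
      (if p2 + q2 ≤ l1 + 1 ∧ l1 + 1 ≤ p2 + q1 ∧ p1 + 1 ≤ l2 ∧ l1 + l2 = p1 + p2 + q1 + q2
        then 1 else 0) := by
  change schurMult (4 + 2) (schurPoly (Fin (4 + 2)) [p1, p2] * schurPoly (Fin (4 + 2)) [q1, q2])
    [l1, l2] = _
  rw [schurMult_pair_eq_coeff_killCompl _ hl2, map_mul, killCompl_schurPoly, killCompl_schurPoly,
    schurPoly_fin_two hp, schurPoly_fin_two hq, ← mul_assoc, X_zero_sub_X_one_mul_schurTwo hp,
    sub_mul, coeff_sub, X_zero_pow_mul_X_one_pow, X_zero_pow_mul_X_one_pow, coeff_monomial_mul',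
    coeff_monomial_mul', pairExp_sub_pairExp, pairExp_sub_pairExp, coeff_schurTwo, coeff_schurTwo]
  simp only [pairExp_le_pairExp_iff, one_mul]
  split_ifs <;> omega

end TwoRows

section Counting

open Finset

/-- `c^λ_{2α,2β}` for `λ = (3m-2k, m+2k)`, `α = (m-s, s)`, `β = (m-t, t)` and `a = m / 2`. -/
def lrAlphaBeta (a k s t : ℕ) : ℤ :=
  (if k + t ≤ a + s ∧ s + t ≤ a + k then 1 else 0) - if a + t + 1 ≤ s + k then 1 else 0

/-- `c^λ_{2γ,2δ}` for `λ = (3m-2k, m+2k)`, `γ = (m+1-u, u)`, `δ = (m-1-v, v)` and `a = m / 2`. -/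
def lrGammaDelta (a k u v : ℕ) : ℤ :=
  (if v + k + 1 ≤ a + u ∧ u + v ≤ a + k then 1 else 0) - if a + v + 2 ≤ u + k then 1 else 0

theorem sum_range_boole_le (n c : ℕ) :
    ∑ s ∈ range n, (if c ≤ s then (1 : ℤ) else 0) = (n - c : ℕ) := by
  rw [sum_boole, ← Nat.card_Ico c n]
  congr 2
  ext s
  simp only [mem_filter, mem_range, mem_Ico]
  omega

variable {a k : ℕ}

theorem sum_lrAlphaBeta_sub_sum_lrGammaDelta {s : ℕ} (hk : k ≤ a) (hs : s ≤ a) :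
    ∑ t ∈ range (a + 1), lrAlphaBeta a k s t - ∑ t ∈ range a, lrGammaDelta a k s t =
      1 - (if a + 1 - k ≤ s then 1 else 0) - if k + 1 ≤ s then 1 else 0 := by
  have hshift : ∀ t ∈ range a, lrAlphaBeta a k s (t + 1) - lrGammaDelta a k s t =
      -if t = a + k - s then (if k + 1 ≤ s then 1 else 0) else 0 := fun t ht => by
    simp only [mem_range] at ht
    unfold lrAlphaBeta lrGammaDelta
    split_ifs <;> omega
  rw [sum_range_succ', add_sub_right_comm, ← sum_sub_distrib, sum_congr rfl hshift,
    sum_neg_distrib, sum_ite_eq', lrAlphaBeta]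
  simp only [mem_range]
  split_ifs <;> omega

theorem sum_sum_lrAlphaBeta_sub_sum_sum_lrGammaDelta (hk : k ≤ a) :
    ∑ s ∈ range (a + 1), ∑ t ∈ range (a + 1), lrAlphaBeta a k s t -
      ∑ u ∈ range (a + 1), ∑ v ∈ range a, lrGammaDelta a k u v = 1 := by
  rw [← sum_sub_distrib, sum_congr rfl fun s hs =>
    sum_lrAlphaBeta_sub_sum_lrGammaDelta hk (Nat.lt_succ_iff.mp (mem_range.mp hs)),
    sum_sub_distrib, sum_sub_distrib, sum_range_boole_le, sum_range_boole_le, sum_const,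
    card_range, nsmul_one]
  omega

theorem sum_sum_lrGammaDelta_succ (hk : k ≤ a) :
    ∑ u ∈ range (a + 2), ∑ v ∈ range (a + 1), lrGammaDelta a k u v =
      ∑ u ∈ range (a + 1), ∑ v ∈ range a, lrGammaDelta a k u v := by
  have hlast : ∀ v, lrGammaDelta a k (a + 1) v = 0 := fun v => by
    unfold lrGammaDelta
    split_ifs <;> omega
  rw [sum_range_succ, sum_eq_zero fun v _ => hlast v, add_zero]
  refine sum_congr rfl fun u hu => ?_
  simp only [mem_range] at hu
  rw [sum_range_succ, lrGammaDelta, add_eq_left]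
  split_ifs <;> omega

end Counting

section Specialization

variable {m k : ℕ}

theorem lrCoeff_eq_lrAlphaBeta (hm : 1 ≤ m) (hk : 2 * k ≤ m) {s t : ℕ} (hs : s ≤ m / 2)
    (ht : t ≤ m / 2) :
    lrCoeff [3*m - 2*k, m + 2*k] [2*(m - s), 2*s] [2*(m - t), 2*t] = lrAlphaBeta (m / 2) k s t := by
  rw [lrCoeff_two_rows (by omega) (by omega) (by omega), lrAlphaBeta]
  split_ifs <;> omega

theorem lrCoeff_eq_lrGammaDelta (hm : 1 ≤ m) (hk : 2 * k ≤ m) {u v : ℕ} (hu : u ≤ (m + 1) / 2)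
    (hv : v ≤ (m - 1) / 2) :
    lrCoeff [3*m - 2*k, m + 2*k] [2*(m + 1 - u), 2*u] [2*(m - 1 - v), 2*v] =
      lrGammaDelta (m / 2) k u v := by
  rw [lrCoeff_two_rows (by omega) (by omega) (by omega), lrGammaDelta]
  split_ifs <;> omega

end Specialization

/-- Let `m ≥ 1`, `0 ≤ k ≤ m/2` and `λ = (3m-2k, m+2k)`.  Then
`Σ_{α,β ⊢ m} c^λ_{2α,2β} − Σ_{γ ⊢ m+1, δ ⊢ m-1} c^λ_{2γ,2δ} = 1`,
where all partitions `α,β,γ,δ` have at most two parts; a partition of `p` with at most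
two parts is written `(p - t, t)` with `0 ≤ t ≤ p/2`. -/
theorem stmt6 (m k : ℕ) (hm : 1 ≤ m) (hk : 2 * k ≤ m) :
    (∑ s ∈ Finset.range (m / 2 + 1), ∑ t ∈ Finset.range (m / 2 + 1),
        lrCoeff [3*m - 2*k, m + 2*k] [2*(m - s), 2*s] [2*(m - t), 2*t]) -
    (∑ u ∈ Finset.range ((m + 1) / 2 + 1), ∑ v ∈ Finset.range ((m - 1) / 2 + 1),
        lrCoeff [3*m - 2*k, m + 2*k] [2*(m + 1 - u), 2*u] [2*(m - 1 - v), 2*v]) = 1 := by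
  have hrange : ∀ {i N : ℕ}, i ∈ Finset.range (N + 1) → i ≤ N :=
    fun hi => Nat.lt_succ_iff.mp (Finset.mem_range.mp hi)
  rw [Finset.sum_congr rfl fun s hs => Finset.sum_congr rfl fun t ht =>
      lrCoeff_eq_lrAlphaBeta hm hk (hrange hs) (hrange ht),
    Finset.sum_congr rfl fun u hu => Finset.sum_congr rfl fun v hv =>
      lrCoeff_eq_lrGammaDelta hm hk (hrange hu) (hrange hv)]
  have hka : k ≤ m / 2 := by omega
  rcases Nat.even_or_odd' m with ⟨a, rfl | rfl⟩
  · rw [show (2 * a + 1) / 2 = 2 * a / 2 by omega, show (2 * a - 1) / 2 + 1 = 2 * a / 2 by omega]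
    exact sum_sum_lrAlphaBeta_sub_sum_sum_lrGammaDelta hka
  · rw [show (2 * a + 1 + 1) / 2 + 1 = (2 * a + 1) / 2 + 2 by omega,
      show (2 * a + 1 - 1) / 2 + 1 = (2 * a + 1) / 2 + 1 by omega, sum_sum_lrGammaDelta_succ hka]
    exact sum_sum_lrAlphaBeta_sub_sum_sum_lrGammaDelta hka
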